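/- Let (T,β) be a rooted tree decomposition of a finite simple graph G, let t be a node of T, and let Z(t) be the set of children of t in T. Then the edge sets E(G_c) for c ∈ Z(t), together with the edge set of G_t[β(t)] (the subgraph of G_t induced on β(t)), are pairwise disjoint, and their union is exactly E(G_t). -/

import Mathlib

/-- `s` is a descendant of `t` in the rooted tree given by the parent map `parent`
(every node is a descendant of itself). -/
def IsDesc {ι : Type*} (parent : ι → ι) (s t : ι) : Prop :=
  ∃ n : ℕ, parent^[n] s = t

/-- A rooted tree decomposition of a graph `G`: a rooted tree, given by a root and a
parent map under which every node reaches the root, together with bags `bag t ⊆ V(G)`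
such that every edge of `G` is contained in some bag, and for every vertex `v` the set of
nodes whose bag contains `v` induces a connected subtree (expressed by convexity along
root-paths together with closure under common ancestors). -/
structure IsRootedTreeDecomp {V ι : Type*} (G : SimpleGraph V) (root : ι) (parent : ι → ι)
    (bag : ι → Set V) : Prop where
  parent_root : parent root = root
  reaches_root : ∀ t : ι, IsDesc parent t root
  edge_covered : ∀ u v : V, G.Adj u v → ∃ t : ι, u ∈ bag t ∧ v ∈ bag t
  convex : ∀ (v : V) (s u t : ι), v ∈ bag s → v ∈ bag t →
    IsDesc parent s u → IsDesc parent u t → v ∈ bag u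
  meet : ∀ (v : V) (s t : ι), v ∈ bag s → v ∈ bag t →
    ∃ u : ι, IsDesc parent s u ∧ IsDesc parent t u ∧ v ∈ bag u

/-- The adhesion `σ(t)`: for a non-root node, `β(t) ∩ β(parent t)`; for the root, `∅`. -/
def adh {V ι : Type*} [DecidableEq ι] (root : ι) (parent : ι → ι) (bag : ι → Set V)
    (t : ι) : Set V :=
  if t = root then ∅ else bag t ∩ bag (parent t)

/-- `γ(t)`: the union of the bags of all descendants of `t`. -/
def gam {V ι : Type*} (parent : ι → ι) (bag : ι → Set V) (t : ι) : Set V :=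
  {v | ∃ s : ι, IsDesc parent s t ∧ v ∈ bag s}

/-- `α(t) = γ(t) \ σ(t)`. -/
def alp {V ι : Type*} [DecidableEq ι] (root : ι) (parent : ι → ι) (bag : ι → Set V)
    (t : ι) : Set V :=
  gam parent bag t \ adh root parent bag t

/-- The graph `G_t`: the subgraph of `G` induced on `γ(t)`, minus all edges with both
endpoints in `σ(t)` (realized as a graph on the vertex set of `G`, whose edges are
exactly those of `G_t`). -/
def Gsub {V ι : Type*} [DecidableEq ι] (G : SimpleGraph V) (root : ι) (parent : ι → ι)
    (bag : ι → Set V) (t : ι) : SimpleGraph V where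
  Adj u v := G.Adj u v ∧ u ∈ gam parent bag t ∧ v ∈ gam parent bag t ∧
    ¬(u ∈ adh root parent bag t ∧ v ∈ adh root parent bag t)
  symm := by
    constructor
    intro u v ⟨h, hu, hv, hn⟩
    exact ⟨h.symm, hv, hu, fun ⟨a, b⟩ => hn ⟨b, a⟩⟩
  loopless := by
    constructor
    intro v hv
    exact hv.1.ne rfl

/-- The graph `G_t[β(t)]`: the subgraph of `G_t` induced on the bag `β(t)`; its edges are
exactly the edges of `G` with both endpoints in `β(t)` but not both endpoints in `σ(t)`. -/
def GsubBag {V ι : Type*} [DecidableEq ι] (G : SimpleGraph V) (root : ι) (parent : ι → ι)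
    (bag : ι → Set V) (t : ι) : SimpleGraph V where
  Adj u v := G.Adj u v ∧ u ∈ bag t ∧ v ∈ bag t ∧
    ¬(u ∈ adh root parent bag t ∧ v ∈ adh root parent bag t)
  symm := by
    constructor
    intro u v ⟨h, hu, hv, hn⟩
    exact ⟨h.symm, hv, hu, fun ⟨a, b⟩ => hn ⟨b, a⟩⟩
  loopless := by
    constructor
    intro v hv
    exact hv.1.ne rfl

/-- The tree decomposition is compact: for every non-root node `t`, the induced subgraph
`G[α(t)]` is connected and `N_G(α(t)) = σ(t)`. -/
def IsCompactDecomp {V ι : Type*} [DecidableEq ι] (G : SimpleGraph V) (root : ι)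
    (parent : ι → ι) (bag : ι → Set V) : Prop :=
  ∀ t : ι, t ≠ root →
    (G.induce (alp root parent bag t)).Connected ∧
    {v | v ∉ alp root parent bag t ∧ ∃ u ∈ alp root parent bag t, G.Adj u v} =
      adh root parent bag t

/-!
Every vertex `u` of `γ(t) \ β(t)` occurs only in bags below a single child `c` of `t`
(the bags containing `u` form a subtree not reaching `t`), and an edge at `u` lies in a bag
on that subtree, so it is an edge of `G_c`. Conversely, a vertex shared by `γ(c)` and `β(t)`,
or by `γ(c₁)` and `γ(c₂)` for siblings, must lie in `β(c) ∩ β(t) = σ(c)` by the subtree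
property, so edges of `G_c` are never edges of `G_t[β(t)]` or of `G_{c'}`.
-/

namespace IsDesc

variable {ι : Type*} {parent : ι → ι} {root a b c t s : ι}

theorem refl (parent : ι → ι) (t : ι) : IsDesc parent t t := ⟨0, rfl⟩

theorem trans (hab : IsDesc parent a b) (hbc : IsDesc parent b c) : IsDesc parent a c := by
  obtain ⟨n, rfl⟩ := hab
  obtain ⟨m, rfl⟩ := hbc
  exact ⟨m + n, Function.iterate_add_apply _ _ _ _⟩

theorem of_parent_eq (hc : parent c = t) : IsDesc parent c t := ⟨1, hc⟩

theorem parent_of_ne (hab : IsDesc parent a b) (hne : a ≠ b) : IsDesc parent (parent a) b := by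
  obtain ⟨_ | n, hn⟩ := hab
  · exact absurd hn hne
  · exact ⟨n, hn⟩

theorem total (ha : IsDesc parent s a) (hb : IsDesc parent s b) :
    IsDesc parent a b ∨ IsDesc parent b a := by
  obtain ⟨n, rfl⟩ := ha
  obtain ⟨m, rfl⟩ := hb
  rcases le_total n m with h | h
  · exact .inl ⟨m - n, by rw [← Function.iterate_add_apply, Nat.sub_add_cancel h]⟩
  · exact .inr ⟨n - m, by rw [← Function.iterate_add_apply, Nat.sub_add_cancel h]⟩

theorem antisymm (hroot : parent root = root) (hreach : ∀ t, IsDesc parent t root)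
    (hab : IsDesc parent a b) (hba : IsDesc parent b a) : a = b := by
  obtain ⟨n, rfl⟩ := hab
  obtain ⟨m, hm⟩ := hba
  rcases Nat.eq_zero_or_pos n with rfl | hn
  · rfl
  -- `a` lies on a cycle of `parent`, but every orbit is eventually stuck at the fixed point `root`
  have hper : Function.IsPeriodicPt parent (m + n) a := by
    rw [Function.IsPeriodicPt, Function.IsFixedPt, Function.iterate_add_apply, hm]
  obtain ⟨k, hk⟩ := hreach a
  have hka : k ≤ (m + n) * k := Nat.le_mul_of_pos_left k (by omega)
  have ha : a = root :=
    calc a = parent^[(m + n) * k] a := (hper.mul_const k).eq.symm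
      _ = parent^[(m + n) * k - k] (parent^[k] a) := by
        rw [← Function.iterate_add_apply, Nat.sub_add_cancel hka]
      _ = root := by rw [hk, Function.iterate_fixed hroot]
  rw [ha, Function.iterate_fixed hroot]

theorem not_isDesc_of_parent_eq (hroot : parent root = root) (hreach : ∀ t, IsDesc parent t root)
    (hc : parent c = t) (hct : c ≠ t) : ¬IsDesc parent t c :=
  fun htc => hct (antisymm hroot hreach (of_parent_eq hc) htc)

theorem eq_of_parent_eq_of_isDesc {c₁ c₂ : ι} (hroot : parent root = root)
    (hreach : ∀ t, IsDesc parent t root) (h₁ : parent c₁ = t) (h₁t : c₁ ≠ t)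
    (h₂ : parent c₂ = t) (h₂t : c₂ ≠ t) ⦃s : ι⦄ (hs₁ : IsDesc parent s c₁)
    (hs₂ : IsDesc parent s c₂) : c₁ = c₂ := by
  by_contra hne
  rcases hs₁.total hs₂ with h | h
  · exact not_isDesc_of_parent_eq hroot hreach h₂ h₂t (h₁ ▸ h.parent_of_ne hne)
  · exact not_isDesc_of_parent_eq hroot hreach h₁ h₁t (h₂ ▸ h.parent_of_ne (Ne.symm hne))

theorem exists_parent_eq_of_ne (hst : IsDesc parent s t) (hne : s ≠ t) :
    ∃ c, parent c = t ∧ c ≠ t ∧ IsDesc parent s c := by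
  obtain ⟨n, hn⟩ := hst
  induction n with
  | zero => exact absurd hn hne
  | succ n ih =>
    rw [Function.iterate_succ_apply'] at hn
    by_cases hc : parent^[n] s = t
    · exact ih hc
    · exact ⟨_, hn, hc, n, rfl⟩

end IsDesc

section

variable {V ι : Type*} {G : SimpleGraph V} {root : ι} {parent : ι → ι} {bag : ι → Set V}
  {t c : ι}

theorem gam_mono (h : IsDesc parent c t) : gam parent bag c ⊆ gam parent bag t :=
  fun _ ⟨s, hs, hus⟩ => ⟨s, hs.trans h, hus⟩

theorem bag_subset_gam (parent : ι → ι) (bag : ι → Set V) (t : ι) :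
    bag t ⊆ gam parent bag t :=
  fun _ hu => ⟨t, IsDesc.refl parent t, hu⟩

variable [DecidableEq ι]

theorem adh_subset_bag (root : ι) (parent : ι → ι) (bag : ι → Set V) (t : ι) :
    adh root parent bag t ⊆ bag t := by
  unfold adh
  split
  · exact Set.empty_subset _
  · exact Set.inter_subset_left

theorem adh_eq_inter_of_parent_eq (hroot : parent root = root)
    (hc : parent c = t) (hct : c ≠ t) : adh root parent bag c = bag c ∩ bag t := by
  have hcr : c ≠ root := by rintro rfl; exact hct (hroot.symm.trans hc)
  rw [adh, if_neg hcr, hc]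

theorem gsubBag_le_gsub (G : SimpleGraph V) (root : ι) (parent : ι → ι) (bag : ι → Set V)
    (t : ι) : GsubBag G root parent bag t ≤ Gsub G root parent bag t :=
  fun _ _ ⟨hadj, hu, hv, hnadh⟩ =>
    ⟨hadj, bag_subset_gam parent bag t hu, bag_subset_gam parent bag t hv, hnadh⟩

theorem disjoint_edgeSet_gsub {H : SimpleGraph V} {S : Set V}
    (hH : ∀ ⦃u v⦄, H.Adj u v → u ∈ S ∧ v ∈ S)
    (hS : gam parent bag c ∩ S ⊆ adh root parent bag c) :
    Disjoint (Gsub G root parent bag c).edgeSet H.edgeSet := by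
  rw [Set.disjoint_left]
  intro e he he'
  induction e using Sym2.ind with
  | h u v =>
    obtain ⟨-, hu, hv, hnadh⟩ := he
    obtain ⟨huS, hvS⟩ := hH he'
    exact hnadh ⟨hS ⟨hu, huS⟩, hS ⟨hv, hvS⟩⟩

end

namespace IsRootedTreeDecomp

variable {V ι : Type*} {G : SimpleGraph V} {root : ι} {parent : ι → ι} {bag : ι → Set V}
  {t c : ι} {u v : V}

theorem mem_bag_of_mem_gam_of_parent_eq (hdec : IsRootedTreeDecomp G root parent bag)
    (hc : parent c = t) (hct : c ≠ t) (hu : u ∈ gam parent bag c) (hut : u ∈ bag t) :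
    u ∈ bag c := by
  obtain ⟨s, hsc, hus⟩ := hu
  obtain ⟨w, hsw, htw, huw⟩ := hdec.meet u s t hus hut
  refine hdec.convex u s c w hus huw hsc ((hsc.total hsw).resolve_right fun hwc => ?_)
  exact IsDesc.not_isDesc_of_parent_eq hdec.parent_root hdec.reaches_root hc hct (htw.trans hwc)

theorem gam_inter_bag_subset_adh [DecidableEq ι] (hdec : IsRootedTreeDecomp G root parent bag)
    (hc : parent c = t) (hct : c ≠ t) :
    gam parent bag c ∩ bag t ⊆ adh root parent bag c := by
  rw [adh_eq_inter_of_parent_eq hdec.parent_root hc hct]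
  exact fun _ ⟨hu, hut⟩ => ⟨hdec.mem_bag_of_mem_gam_of_parent_eq hc hct hu hut, hut⟩

theorem gam_inter_gam_subset_adh [DecidableEq ι] {c₁ c₂ : ι}
    (hdec : IsRootedTreeDecomp G root parent bag) (h₁ : parent c₁ = t) (h₁t : c₁ ≠ t)
    (h₂ : parent c₂ = t) (h₂t : c₂ ≠ t) (hne : c₁ ≠ c₂) :
    gam parent bag c₁ ∩ gam parent bag c₂ ⊆ adh root parent bag c₁ := by
  rintro u ⟨⟨s₁, hs₁, hus₁⟩, ⟨s₂, hs₂, hus₂⟩⟩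
  obtain ⟨w, hs₁w, hs₂w, huw⟩ := hdec.meet u s₁ s₂ hus₁ hus₂
  have siblings := IsDesc.eq_of_parent_eq_of_isDesc hdec.parent_root hdec.reaches_root
    h₁ h₁t h₂ h₂t
  -- the node `w` joining the two occurrences of `u` lies strictly above `c₁`, hence above `t`
  have hc₁w : IsDesc parent c₁ w :=
    (hs₁.total hs₁w).resolve_right fun hwc₁ => hne (siblings (hs₂w.trans hwc₁) hs₂)
  have hc₁w' : c₁ ≠ w := by rintro rfl; exact hne (siblings hs₂w hs₂)
  have htw : IsDesc parent t w := h₁ ▸ hc₁w.parent_of_ne hc₁w'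
  have hut : u ∈ bag t :=
    hdec.convex u s₁ t w hus₁ huw (hs₁.trans (IsDesc.of_parent_eq h₁)) htw
  exact hdec.gam_inter_bag_subset_adh h₁ h₁t ⟨⟨s₁, hs₁, hus₁⟩, hut⟩

theorem exists_parent_eq_mem_gam (hdec : IsRootedTreeDecomp G root parent bag)
    (hadj : G.Adj u v) (hu : u ∈ gam parent bag t) (hut : u ∉ bag t) :
    ∃ c, parent c = t ∧ c ≠ t ∧ u ∈ gam parent bag c ∧ v ∈ gam parent bag c := by
  obtain ⟨x, hux, hvx⟩ := hdec.edge_covered u v hadj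
  obtain ⟨s, hst, hus⟩ := hu
  obtain ⟨w, hxw, hsw, huw⟩ := hdec.meet u x s hux hus
  have hwt : IsDesc parent w t :=
    (hsw.total hst).resolve_right fun htw => hut (hdec.convex u s t w hus huw hst htw)
  have hwt' : w ≠ t := by rintro rfl; exact hut huw
  obtain ⟨c, hc, hct, hwc⟩ := hwt.exists_parent_eq_of_ne hwt'
  exact ⟨c, hc, hct, ⟨x, hxw.trans hwc, hux⟩, ⟨x, hxw.trans hwc, hvx⟩⟩

variable [DecidableEq ι]

theorem gsub_le_of_parent_eq (hdec : IsRootedTreeDecomp G root parent bag)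
    (hc : parent c = t) (hct : c ≠ t) : Gsub G root parent bag c ≤ Gsub G root parent bag t := by
  rintro u v ⟨hadj, hu, hv, hnadh⟩
  have hct' := IsDesc.of_parent_eq hc
  refine ⟨hadj, gam_mono hct' hu, gam_mono hct' hv, fun ⟨hut, hvt⟩ => hnadh ⟨?_, ?_⟩⟩
  · exact hdec.gam_inter_bag_subset_adh hc hct ⟨hu, adh_subset_bag root parent bag t hut⟩
  · exact hdec.gam_inter_bag_subset_adh hc hct ⟨hv, adh_subset_bag root parent bag t hvt⟩

theorem exists_gsub_adj_of_not_mem_bag (hdec : IsRootedTreeDecomp G root parent bag)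
    (h : (Gsub G root parent bag t).Adj u v) (hut : u ∉ bag t) :
    ∃ c, parent c = t ∧ c ≠ t ∧ (Gsub G root parent bag c).Adj u v := by
  obtain ⟨hadj, hu, -, -⟩ := h
  obtain ⟨c, hc, hct, huc, hvc⟩ := hdec.exists_parent_eq_mem_gam hadj hu hut
  refine ⟨c, hc, hct, hadj, huc, hvc, fun ⟨hua, _⟩ => hut ?_⟩
  rw [adh_eq_inter_of_parent_eq hdec.parent_root hc hct] at hua
  exact hua.2

theorem gsubBag_adj_or_exists_gsub_adj (hdec : IsRootedTreeDecomp G root parent bag)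
    (h : (Gsub G root parent bag t).Adj u v) :
    (GsubBag G root parent bag t).Adj u v ∨
      ∃ c, parent c = t ∧ c ≠ t ∧ (Gsub G root parent bag c).Adj u v := by
  by_cases hut : u ∈ bag t
  · by_cases hvt : v ∈ bag t
    · exact .inl ⟨h.1, hut, hvt, h.2.2.2⟩
    · obtain ⟨c, hc, hct, hvu⟩ := hdec.exists_gsub_adj_of_not_mem_bag h.symm hvt
      exact .inr ⟨c, hc, hct, hvu.symm⟩
  · exact .inr (hdec.exists_gsub_adj_of_not_mem_bag h hut)

end IsRootedTreeDecomp

open SimpleGraph in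
theorem edgeSets_partition_general {V ι : Type*} [DecidableEq ι]
    (G : SimpleGraph V) (root : ι) (parent : ι → ι) (bag : ι → Set V)
    (hdec : IsRootedTreeDecomp G root parent bag) (t : ι) :
    (∀ c₁ c₂ : ι, parent c₁ = t → c₁ ≠ t → parent c₂ = t → c₂ ≠ t → c₁ ≠ c₂ →
      Disjoint (Gsub G root parent bag c₁).edgeSet (Gsub G root parent bag c₂).edgeSet) ∧
    (∀ c : ι, parent c = t → c ≠ t →
      Disjoint (Gsub G root parent bag c).edgeSet (GsubBag G root parent bag t).edgeSet) ∧
    ((⋃ c ∈ {c : ι | parent c = t ∧ c ≠ t}, (Gsub G root parent bag c).edgeSet) ∪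
        (GsubBag G root parent bag t).edgeSet = (Gsub G root parent bag t).edgeSet) := by
  refine ⟨fun c₁ c₂ h₁ h₁t h₂ h₂t hne => ?_, fun c hc hct => ?_, ?_⟩
  · exact disjoint_edgeSet_gsub (fun _ _ h => ⟨h.2.1, h.2.2.1⟩)
      (hdec.gam_inter_gam_subset_adh h₁ h₁t h₂ h₂t hne)
  · exact disjoint_edgeSet_gsub (fun _ _ h => ⟨h.2.1, h.2.2.1⟩)
      (hdec.gam_inter_bag_subset_adh hc hct)
  refine subset_antisymm (Set.union_subset ?_ (edgeSet_mono (gsubBag_le_gsub ..))) ?_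
  · exact Set.iUnion₂_subset fun c ⟨hc, hct⟩ => edgeSet_mono (hdec.gsub_le_of_parent_eq hc hct)
  intro e he
  induction e using Sym2.ind with
  | h u v =>
    rcases hdec.gsubBag_adj_or_exists_gsub_adj he with h | ⟨c, hc, hct, h⟩
    · exact .inr h
    · exact .inl (Set.mem_biUnion (x := c) ⟨hc, hct⟩ h)

/-- in a rooted tree decomposition, for every node `t`, the edge sets
`E(G_c)` for the children `c` of `t`, together with the edge set of `G_t[β(t)]`, are
pairwise disjoint, and their union is exactly `E(G_t)`. -/
theorem edgeSets_partition {V ι : Type*} [Fintype V] [Fintype ι] [DecidableEq ι]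
    (G : SimpleGraph V) (root : ι) (parent : ι → ι) (bag : ι → Set V)
    (hdec : IsRootedTreeDecomp G root parent bag) (t : ι) :
    (∀ c₁ c₂ : ι, parent c₁ = t → c₁ ≠ t → parent c₂ = t → c₂ ≠ t → c₁ ≠ c₂ →
      Disjoint (Gsub G root parent bag c₁).edgeSet (Gsub G root parent bag c₂).edgeSet) ∧
    (∀ c : ι, parent c = t → c ≠ t →
      Disjoint (Gsub G root parent bag c).edgeSet (GsubBag G root parent bag t).edgeSet) ∧
    ((⋃ c ∈ {c : ι | parent c = t ∧ c ≠ t}, (Gsub G root parent bag c).edgeSet) ∪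
        (GsubBag G root parent bag t).edgeSet = (Gsub G root parent bag t).edgeSet) :=
  edgeSets_partition_general G root parent bag hdec t
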